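/- arXiv:1804.03728 — 3 statements merged into one kernel-verified Lean document; each statement's English description precedes it below -/
import Mathlib

section
/- Von Neumann's trace inequality: for matrices A, B ∈ ℂ^{m×n} with q = min(m,n), one has Re(trace(Bᴴ A)) ≤ Σ_{i=1}^{q} σ_i(A)·σ_i(B), where σ_i denotes the i-th largest singular value. Moreover equality holds when A and B admit SVDs with the same left and right singular vector matrices. -/
/-!
Write `A = U Σ_A Vᴴ` and `B = W Σ_B Xᴴ`. By cyclicity of the trace,
`Re tr(Aᴴ B) = Re tr(Σ_Aᴴ P Σ_B Q)` with `P = Uᴴ W` and `Q = Xᴴ V` unitary, a sum of terms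
`σ_j(A) σ_k(B) Re(P_jk Q_kj)`. Bounding `Re(P_jk Q_kj) ≤ (|P_jk|² + |Q_kj|²) / 2` splits it into
two sums `∑ σ_j(A) σ_k(B) |P_jk|²` and `∑ σ_k(B) σ_j(A) |Q_kj|²`. The matrices `(|P_jk|²)` and
`(|Q_kj|²)` are doubly stochastic, so by Birkhoff's theorem each sum is at most its value at some
permutation matrix, which the rearrangement inequality bounds by `∑ σ_i(A) σ_i(B)`.
When `U = W` and `V = X`, `P` and `Q` are identities and the trace is exactly that sum.
-/

open Matrix Finset

/-- Real (Frobenius) inner product `⟨X,Y⟩ = Re(trace(Yᴴ X))`. -/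
noncomputable def finner {m n : ℕ} (X Y : Matrix (Fin m) (Fin n) ℂ) : ℝ :=
  (Matrix.trace (Yᴴ * X)).re

/-- The `m × n` rectangular diagonal matrix with diagonal entries `σ 0, σ 1, …`. -/
def svdDiagMatrix (m n : ℕ) (σ : ℕ → ℝ) : Matrix (Fin m) (Fin n) ℂ :=
  Matrix.of fun i j => if (i : ℕ) = (j : ℕ) then (σ (i : ℕ) : ℂ) else 0

/-- `σ` lists the singular values of `A` in nonincreasing order (padding with zeros). -/
def IsSingularValues {m n : ℕ} (A : Matrix (Fin m) (Fin n) ℂ) (σ : ℕ → ℝ) : Prop :=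
  (∀ i, 0 ≤ σ i) ∧ (∀ i j, i ≤ j → σ j ≤ σ i) ∧ (∀ i, min m n ≤ i → σ i = 0) ∧
    ∃ U ∈ Matrix.unitaryGroup (Fin m) ℂ, ∃ V ∈ Matrix.unitaryGroup (Fin n) ℂ,
      A = U * svdDiagMatrix m n σ * Vᴴ

theorem RCLike.re_mul_le_half_add_sq {𝕜 : Type*} [RCLike 𝕜] (z w : 𝕜) :
    re (z * w) ≤ (‖z‖ ^ 2 + ‖w‖ ^ 2) / 2 := by
  have := two_mul_le_add_sq ‖z‖ ‖w‖
  calc re (z * w) ≤ ‖z * w‖ := re_le_norm _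
    _ = ‖z‖ * ‖w‖ := norm_mul _ _
    _ ≤ _ := by linarith

theorem Fin.sum_univ_eq_sum_range_of_le {M : Type*} [AddCommMonoid M] {k n : ℕ} (hkn : k ≤ n)
    {f : ℕ → M} (hf : ∀ i, k ≤ i → f i = 0) : ∑ i : Fin n, f i = ∑ i ∈ range k, f i := by
  rw [Fin.sum_univ_eq_sum_range f n]
  exact (sum_subset (range_subset_range.2 hkn) fun i _ hi => hf i (by simpa using hi)).symm

namespace Matrix

theorem dotProduct_mulVec_le_of_mem_doublyStochastic {n : Type*} [Fintype n] [DecidableEq n]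
    {f g : n → ℝ} (hfg : Monovary f g) {M : Matrix n n ℝ} (hM : M ∈ doublyStochastic ℝ n) :
    f ⬝ᵥ M *ᵥ g ≤ f ⬝ᵥ g := by
  let φ : Matrix n n ℝ →ₗ[ℝ] ℝ :=
    { toFun := fun M => f ⬝ᵥ M *ᵥ g
      map_add' := fun M N => by simp only [add_mulVec, dotProduct_add]
      map_smul' := fun c M => by simp only [smul_mulVec, dotProduct_smul, RingHom.id_apply] }
  rw [← SetLike.mem_coe, doublyStochastic_eq_convexHull_permMatrix] at hM
  obtain ⟨_, ⟨σ, rfl⟩, hσ⟩ :=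
    (φ.convexOn convex_univ).exists_ge_of_mem_convexHull (Set.subset_univ _) hM
  calc f ⬝ᵥ M *ᵥ g ≤ f ⬝ᵥ σ.permMatrix ℝ *ᵥ g := hσ
    _ ≤ f ⬝ᵥ g := by
      rw [permMatrix_mulVec]
      exact hfg.sum_mul_comp_perm_le_sum_mul

theorem norm_sq_mem_doublyStochastic {𝕜 n : Type*} [RCLike 𝕜] [Fintype n] [DecidableEq n]
    {U : Matrix n n 𝕜} (hU : U ∈ unitaryGroup n 𝕜) :
    (of fun i j => ‖U i j‖ ^ 2) ∈ doublyStochastic ℝ n := by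
  have hrow (i : n) : ∑ j, ‖U i j‖ ^ 2 = 1 := by
    have h : (U * Uᴴ) i i = 1 := by
      rw [← star_eq_conjTranspose, mem_unitaryGroup_iff.1 hU, one_apply_eq]
    simp only [mul_apply, conjTranspose_apply, ← starRingEnd_apply, RCLike.mul_conj] at h
    exact_mod_cast h
  have hcol (j : n) : ∑ i, ‖U i j‖ ^ 2 = 1 := by
    have h : (Uᴴ * U) j j = 1 := by
      rw [← star_eq_conjTranspose, mem_unitaryGroup_iff'.1 hU, one_apply_eq]
    simp only [mul_apply, conjTranspose_apply, ← starRingEnd_apply, RCLike.conj_mul] at h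
    exact_mod_cast h
  exact mem_doublyStochastic_iff_sum.2 ⟨fun _ _ => by simp only [of_apply]; positivity, hrow, hcol⟩

theorem re_trace_conjTranspose_mul_le {𝕜 m n : Type*} [RCLike 𝕜] [Fintype m] [Fintype n]
    {D E : Matrix m n ℝ} (hD : ∀ j l, 0 ≤ D j l) (hE : ∀ k t, 0 ≤ E k t)
    (P : Matrix m m 𝕜) (Q : Matrix n n 𝕜) :
    RCLike.re (trace ((D.map ((↑) : ℝ → 𝕜))ᴴ * P * E.map ((↑) : ℝ → 𝕜) * Q)) ≤
      ((D *ᵥ 1) ⬝ᵥ (of fun j k => ‖P j k‖ ^ 2) *ᵥ (E *ᵥ 1) +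
        (Eᵀ *ᵥ 1) ⬝ᵥ (of fun t l => ‖Q t l‖ ^ 2) *ᵥ (Dᵀ *ᵥ 1)) / 2 := by
  have hP : ∑ l, ∑ t, ∑ k, ∑ j, D j l * E k t * ‖P j k‖ ^ 2 =
      (D *ᵥ 1) ⬝ᵥ (of fun j k => ‖P j k‖ ^ 2) *ᵥ (E *ᵥ 1) := by
    simp only [dotProduct, mulVec, of_apply, Pi.one_apply, mul_one, sum_mul, mul_sum]
    simp only [Finset.sum_comm (γ := n) (α := m)]
    rw [Finset.sum_comm]
    exact sum_congr rfl fun _ _ => sum_congr rfl fun _ _ =>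
      Finset.sum_comm.trans (sum_congr rfl fun _ _ => sum_congr rfl fun _ _ => by ring)
  have hQ : ∑ l, ∑ t, ∑ k, ∑ j, D j l * E k t * ‖Q t l‖ ^ 2 =
      (Eᵀ *ᵥ 1) ⬝ᵥ (of fun t l => ‖Q t l‖ ^ 2) *ᵥ (Dᵀ *ᵥ 1) := by
    simp only [dotProduct, mulVec, of_apply, transpose_apply, Pi.one_apply, mul_one, sum_mul,
      mul_sum]
    simp only [Finset.sum_comm (γ := n) (α := m)]
    rw [Finset.sum_comm]
    exact sum_congr rfl fun _ _ => sum_congr rfl fun _ _ =>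
      Finset.sum_comm.trans (sum_congr rfl fun _ _ => sum_congr rfl fun _ _ => by ring)
  calc RCLike.re (trace ((D.map ((↑) : ℝ → 𝕜))ᴴ * P * E.map ((↑) : ℝ → 𝕜) * Q))
      = ∑ l, ∑ t, ∑ k, ∑ j, D j l * E k t * RCLike.re (P j k * Q t l) := by
        simp only [trace, diag, mul_apply, map_apply, conjTranspose_apply, RCLike.star_def,
          RCLike.conj_ofReal, sum_mul, map_sum]
        refine sum_congr rfl fun _ _ => sum_congr rfl fun _ _ => sum_congr rfl fun _ _ =>
          sum_congr rfl fun _ _ => ?_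
        rw [← RCLike.re_ofReal_mul]
        push_cast
        ring_nf
    _ ≤ ∑ l, ∑ t, ∑ k, ∑ j, D j l * E k t * ((‖P j k‖ ^ 2 + ‖Q t l‖ ^ 2) / 2) := by
        gcongr with l _ t _ k _ j _
        · exact mul_nonneg (hD j l) (hE k t)
        · exact RCLike.re_mul_le_half_add_sq _ _
    _ = _ := by
        simp only [mul_add, add_div, mul_div_assoc', sum_add_distrib, ← sum_div, hP, hQ]

theorem trace_conjTranspose_mul_factors {R l m : Type*} [CommSemiring R] [StarRing R]
    [Fintype l] [Fintype m] (U W : Matrix l l R) (D E : Matrix l m R) (V X : Matrix m m R) :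
    trace ((U * D * Vᴴ)ᴴ * (W * E * Xᴴ)) = trace (Dᴴ * (Uᴴ * W) * E * (Xᴴ * V)) := by
  simp only [conjTranspose_mul, conjTranspose_conjTranspose, Matrix.mul_assoc]
  rw [trace_mul_comm]
  simp only [Matrix.mul_assoc]

end Matrix

def svdDiagMatrixReal (m n : ℕ) (σ : ℕ → ℝ) : Matrix (Fin m) (Fin n) ℝ :=
  of fun i j => if (i : ℕ) = j then σ i else 0

theorem svdDiagMatrix_eq_map (m n : ℕ) (σ : ℕ → ℝ) :
    svdDiagMatrix m n σ = (svdDiagMatrixReal m n σ).map ((↑) : ℝ → ℂ) := by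
  ext i j
  simp only [svdDiagMatrix, svdDiagMatrixReal, map_apply, of_apply, apply_ite Complex.ofReal,
    Complex.ofReal_zero]

theorem svdDiagMatrixReal_nonneg {m n : ℕ} {σ : ℕ → ℝ} (hσ : ∀ i, 0 ≤ σ i) (i : Fin m)
    (j : Fin n) : 0 ≤ svdDiagMatrixReal m n σ i j := by
  simp only [svdDiagMatrixReal, of_apply]
  split_ifs
  exacts [hσ i, le_rfl]

theorem svdDiagMatrixReal_transpose (m n : ℕ) (σ : ℕ → ℝ) :
    (svdDiagMatrixReal m n σ)ᵀ = svdDiagMatrixReal n m σ := by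
  ext i j
  by_cases h : (i : ℕ) = j <;> simp [svdDiagMatrixReal, h, eq_comm]

theorem svdDiagMatrixReal_mulVec_one {m n : ℕ} {σ : ℕ → ℝ} (hσ : ∀ i, min m n ≤ i → σ i = 0) :
    svdDiagMatrixReal m n σ *ᵥ 1 = fun i : Fin m => σ i := by
  ext i
  have hsum := Fin.sum_univ_eq_sum_range (fun l => if (i : ℕ) = l then σ i else 0) n
  simp only [mulVec, dotProduct, svdDiagMatrixReal, of_apply, Pi.one_apply, mul_one]
  rw [hsum, sum_ite_eq]
  split_ifs with h
  · rfl
  · exact (hσ i (by rw [mem_range] at h; omega)).symm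

theorem re_trace_svdDiagMatrix_conjTranspose_mul {m n : ℕ} {σ τ : ℕ → ℝ}
    (hσ : ∀ i, min m n ≤ i → σ i = 0) :
    (trace ((svdDiagMatrix m n σ)ᴴ * svdDiagMatrix m n τ)).re =
      ∑ i ∈ range (min m n), σ i * τ i := by
  have hστ : ∀ i, min m n ≤ i → σ i * τ i = 0 := fun i hi => by rw [hσ i hi, zero_mul]
  have hentry (j : Fin m) (l : Fin n) :
      star (svdDiagMatrix m n σ j l) * svdDiagMatrix m n τ j l =
        ((svdDiagMatrixReal n m (fun i => σ i * τ i) l j : ℝ) : ℂ) := by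
    by_cases h : (j : ℕ) = l <;> simp [svdDiagMatrix, svdDiagMatrixReal, h, eq_comm]
  have hrow := congrFun (svdDiagMatrixReal_mulVec_one (min_comm m n ▸ hστ))
  simp only [mulVec, dotProduct, Pi.one_apply, mul_one] at hrow
  simp only [trace, Matrix.diag, mul_apply, conjTranspose_apply, hentry, ← Complex.ofReal_sum,
    Complex.ofReal_re, hrow]
  exact Fin.sum_univ_eq_sum_range_of_le (min_le_right m n) hστ

theorem re_trace_svdDiagMatrix_conjTranspose_mul_le {m n : ℕ} {σ τ : ℕ → ℝ}
    (hσ₀ : ∀ i, 0 ≤ σ i) (hσ : Antitone σ) (hσ₁ : ∀ i, min m n ≤ i → σ i = 0)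
    (hτ₀ : ∀ i, 0 ≤ τ i) (hτ : Antitone τ) (hτ₁ : ∀ i, min m n ≤ i → τ i = 0)
    {P : Matrix (Fin m) (Fin m) ℂ} (hP : P ∈ unitaryGroup (Fin m) ℂ)
    {Q : Matrix (Fin n) (Fin n) ℂ} (hQ : Q ∈ unitaryGroup (Fin n) ℂ) :
    (trace ((svdDiagMatrix m n σ)ᴴ * P * svdDiagMatrix m n τ * Q)).re ≤
      ∑ i ∈ range (min m n), σ i * τ i := by
  have hbound := re_trace_conjTranspose_mul_le (svdDiagMatrixReal_nonneg hσ₀)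
    (svdDiagMatrixReal_nonneg hτ₀) P Q
  rw [svdDiagMatrixReal_transpose, svdDiagMatrixReal_transpose, svdDiagMatrixReal_mulVec_one hσ₁,
    svdDiagMatrixReal_mulVec_one hτ₁, svdDiagMatrixReal_mulVec_one (by rwa [min_comm]),
    svdDiagMatrixReal_mulVec_one (by rwa [min_comm])] at hbound
  have hmono {k : ℕ} {f g : ℕ → ℝ} (hf : Antitone f) (hg : Antitone g) :
      Monovary (fun i : Fin k => f i) (fun i => g i) :=
    (hf.comp_monotone Fin.val_strictMono.monotone).monovary
      (hg.comp_monotone Fin.val_strictMono.monotone)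
  have hP' := dotProduct_mulVec_le_of_mem_doublyStochastic (hmono hσ hτ)
    (norm_sq_mem_doublyStochastic hP)
  have hQ' := dotProduct_mulVec_le_of_mem_doublyStochastic (hmono hτ hσ)
    (norm_sq_mem_doublyStochastic hQ)
  have hστ : ∀ i, min m n ≤ i → σ i * τ i = 0 := fun i hi => by rw [hσ₁ i hi, zero_mul]
  have hsumm : (fun i : Fin m => σ i) ⬝ᵥ (fun i => τ i) = ∑ i ∈ range (min m n), σ i * τ i :=
    Fin.sum_univ_eq_sum_range_of_le (min_le_left m n) hστ
  have hsumn : (fun i : Fin n => τ i) ⬝ᵥ (fun i => σ i) = ∑ i ∈ range (min m n), σ i * τ i := by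
    rw [dotProduct_comm]
    exact Fin.sum_univ_eq_sum_range_of_le (min_le_right m n) hστ
  rw [svdDiagMatrix_eq_map, svdDiagMatrix_eq_map]
  exact hbound.trans (by linarith)

/-- Von Neumann's trace inequality:
`Re(trace(Bᴴ A)) ≤ ∑_{i<min(m,n)} σ_i(A) σ_i(B)`, with equality when `A` and `B` admit
SVDs with the same left and right singular vector matrices. -/
theorem stmt_1 (m n : ℕ) (A B : Matrix (Fin m) (Fin n) ℂ) (σA σB : ℕ → ℝ)
    (hA : IsSingularValues A σA) (hB : IsSingularValues B σB) :
    finner B A ≤ (∑ i ∈ Finset.range (min m n), σA i * σB i) ∧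
      ∀ U ∈ Matrix.unitaryGroup (Fin m) ℂ, ∀ V ∈ Matrix.unitaryGroup (Fin n) ℂ,
        A = U * svdDiagMatrix m n σA * Vᴴ → B = U * svdDiagMatrix m n σB * Vᴴ →
          finner B A = ∑ i ∈ Finset.range (min m n), σA i * σB i := by
  obtain ⟨hA₀, hAanti, hA₁, U, hU, V, hV, hAeq⟩ := hA
  obtain ⟨hB₀, hBanti, hB₁, W, hW, X, hX, hBeq⟩ := hB
  refine ⟨?_, fun U' hU' V' hV' hA' hB' => ?_⟩
  · rw [finner, hAeq, hBeq, trace_conjTranspose_mul_factors]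
    exact re_trace_svdDiagMatrix_conjTranspose_mul_le hA₀ (fun i j => hAanti i j) hA₁ hB₀
      (fun i j => hBanti i j) hB₁ (mul_mem (Unitary.star_mem hU) hW)
      (mul_mem (Unitary.star_mem hX) hV)
  · rw [finner, hA', hB', trace_conjTranspose_mul_factors, ← star_eq_conjTranspose,
      ← star_eq_conjTranspose, Unitary.star_mul_self_of_mem hU',
      Unitary.star_mul_self_of_mem hV', Matrix.mul_one, Matrix.mul_one]
    exact re_trace_svdDiagMatrix_conjTranspose_mul hA₁
end

section
/- Subgradient characterization of the nuclear norm: let A = U S Vᴴ be a reduced SVD of a matrix A of rank r (U ∈ ℂ^{m×r}, V ∈ ℂ^{n×r} with orthonormal columns, S positive diagonal). If G = U Vᴴ + W where Uᴴ W = 0, W V = 0, and ‖W‖ ≤ 1 (spectral norm), then ⟨G, A⟩ = ‖A‖_* (nuclear norm) and ‖G‖ ≤ 1; hence G is a subgradient of the nuclear norm at A. -/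
open Matrix

/-- Spectral norm (largest singular value) of a complex matrix. -/
noncomputable def specNorm {m n : ℕ} (A : Matrix (Fin m) (Fin n) ℂ) : ℝ :=
  ‖LinearMap.toContinuousLinearMap (Matrix.toEuclideanLin A)‖

private lemma euclid_mul {a b c : ℕ} (A : Matrix (Fin a) (Fin b) ℂ) (B : Matrix (Fin b) (Fin c) ℂ)
    (x : EuclideanSpace ℂ (Fin c)) :
    Matrix.toEuclideanLin (A * B) x = Matrix.toEuclideanLin A (Matrix.toEuclideanLin B x) := by
  simp [Matrix.toEuclideanLin_apply, Matrix.mulVec_mulVec]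

private lemma euclid_adj {a b : ℕ} (A : Matrix (Fin a) (Fin b) ℂ) (x : EuclideanSpace ℂ (Fin a))
    (y : EuclideanSpace ℂ (Fin b)) :
    inner ℂ (Matrix.toEuclideanLin Aᴴ x) y = (inner ℂ x (Matrix.toEuclideanLin A y) : ℂ) := by
  rw [Matrix.toEuclideanLin_conjTranspose_eq_adjoint, LinearMap.adjoint_inner_left]

private lemma euclid_adj' {a b : ℕ} (A : Matrix (Fin a) (Fin b) ℂ) (x : EuclideanSpace ℂ (Fin b))
    (y : EuclideanSpace ℂ (Fin a)) :
    inner ℂ (Matrix.toEuclideanLin A x) y = (inner ℂ x (Matrix.toEuclideanLin Aᴴ y) : ℂ) := by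
  conv_lhs => rw [show A = Aᴴᴴ by simp]
  rw [euclid_adj]

private lemma euclid_norm_le {a b : ℕ} (A : Matrix (Fin a) (Fin b) ℂ)
    (x : EuclideanSpace ℂ (Fin b)) :
    ‖Matrix.toEuclideanLin A x‖ ≤ specNorm A * ‖x‖ := by
  simpa [specNorm] using (LinearMap.toContinuousLinearMap (Matrix.toEuclideanLin A)).le_opNorm x

private lemma euclid_one {a : ℕ} (x : EuclideanSpace ℂ (Fin a)) :
    Matrix.toEuclideanLin (1 : Matrix (Fin a) (Fin a) ℂ) x = x := by
  simp [Matrix.toEuclideanLin_apply]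

/-- Subgradient characterization of the nuclear norm.  If `A = U S Vᴴ` is
a reduced SVD of a rank-`r` matrix `A` (orthonormal columns `U`, `V`, positive diagonal
`S = diag s`), and `G = U Vᴴ + W` with `Uᴴ W = 0`, `W V = 0`, `‖W‖ ≤ 1`, then
`⟨G, A⟩ = ‖A‖_* = ∑ᵢ sᵢ` and `‖G‖ ≤ 1` (hence `G` is a subgradient of `‖·‖_*` at `A`). -/
theorem stmt_4 (m n r : ℕ) (A : Matrix (Fin m) (Fin n) ℂ)
    (U : Matrix (Fin m) (Fin r) ℂ) (V : Matrix (Fin n) (Fin r) ℂ) (s : Fin r → ℝ)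
    (hU : Uᴴ * U = 1) (hV : Vᴴ * V = 1) (hs : ∀ i, 0 < s i)
    (hA : A = U * Matrix.diagonal (fun i => (s i : ℂ)) * Vᴴ) (hrank : A.rank = r)
    (W : Matrix (Fin m) (Fin n) ℂ) (hW1 : Uᴴ * W = 0) (hW2 : W * V = 0)
    (hW3 : specNorm W ≤ 1) (G : Matrix (Fin m) (Fin n) ℂ) (hG : G = U * Vᴴ + W) :
    finner G A = (∑ i, s i) ∧ specNorm G ≤ 1 := by
  constructor
  · -- trace computation
    have hAH : Aᴴ = V * Matrix.diagonal (fun i => (s i : ℂ)) * Uᴴ := by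
      subst hA
      have hstar : (star fun i => ((s i : ℂ))) = fun i => ((s i : ℂ)) := by
        funext i; simp [Complex.conj_ofReal]
      simp [Matrix.conjTranspose_mul, Matrix.diagonal_conjTranspose, Matrix.mul_assoc, hstar]
    have key : Aᴴ * G = V * Matrix.diagonal (fun i => (s i : ℂ)) * Vᴴ := by
      rw [hAH, hG, Matrix.mul_add]
      rw [show V * Matrix.diagonal (fun i => (s i : ℂ)) * Uᴴ * (U * Vᴴ)
          = V * Matrix.diagonal (fun i => (s i : ℂ)) * (Uᴴ * U) * Vᴴ by
        simp [Matrix.mul_assoc]]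
      rw [show V * Matrix.diagonal (fun i => (s i : ℂ)) * Uᴴ * W
          = V * Matrix.diagonal (fun i => (s i : ℂ)) * (Uᴴ * W) by
        simp [Matrix.mul_assoc]]
      simp [hU, hW1]
    have : (Matrix.trace (Aᴴ * G)) = ∑ i, (s i : ℂ) := by
      rw [key, Matrix.trace_mul_cycle, hV, Matrix.one_mul, Matrix.trace_diagonal]
    simp only [finner, this]
    simp
  · -- operator norm bound
    rw [specNorm]
    refine ContinuousLinearMap.opNorm_le_bound _ zero_le_one (fun x => ?_)
    rw [one_mul]
    simp only [LinearMap.coe_toContinuousLinearMap']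
    -- key vectors
    set u : EuclideanSpace ℂ (Fin r) := Matrix.toEuclideanLin Vᴴ x with hu
    set w : EuclideanSpace ℂ (Fin m) := Matrix.toEuclideanLin W x with hw
    set p : EuclideanSpace ℂ (Fin n) := Matrix.toEuclideanLin (V * Vᴴ) x with hp
    have hGx : Matrix.toEuclideanLin G x = Matrix.toEuclideanLin U u + w := by
      rw [hG, map_add, LinearMap.add_apply, euclid_mul]
    -- ‖toEuclideanLin U u‖² = ‖u‖², cross term vanishes
    have hUu : (inner ℂ (Matrix.toEuclideanLin U u) (Matrix.toEuclideanLin U u) : ℂ)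
        = inner ℂ u u := by
      rw [euclid_adj', ← euclid_mul, hU, euclid_one]
    have hcross : (inner ℂ (Matrix.toEuclideanLin U u) w : ℂ) = 0 := by
      rw [euclid_adj', hw, ← euclid_mul, hW1]
      simp
    have hVu : (inner ℂ p p : ℂ) = inner ℂ u u := by
      rw [hp, euclid_mul, euclid_adj', ← euclid_mul, hV, euclid_one]
    have hxp : (inner ℂ x p : ℂ) = inner ℂ u u := by
      rw [hp, euclid_mul, ← euclid_adj]
    -- ‖Gx‖² = ‖u‖² + ‖w‖²
    have h1 : ‖Matrix.toEuclideanLin G x‖ ^ 2 = ‖u‖ ^ 2 + ‖w‖ ^ 2 := by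
      rw [hGx, @norm_add_sq ℂ]
      have hn : ‖Matrix.toEuclideanLin U u‖ ^ 2 = ‖u‖ ^ 2 := by
        rw [← inner_self_eq_norm_sq (𝕜 := ℂ), ← inner_self_eq_norm_sq (𝕜 := ℂ), hUu]
      rw [hn, hcross]
      simp
    -- w = W (x - p), so ‖w‖ ≤ ‖x - p‖
    have hwxp : w = Matrix.toEuclideanLin W (x - p) := by
      rw [map_sub, hp, ← euclid_mul, ← Matrix.mul_assoc, hW2]
      simp [hw]
    have h2 : ‖w‖ ≤ ‖x - p‖ := by
      calc ‖w‖ = ‖Matrix.toEuclideanLin W (x - p)‖ := by rw [hwxp]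
        _ ≤ specNorm W * ‖x - p‖ := euclid_norm_le _ _
        _ ≤ 1 * ‖x - p‖ := by
            exact mul_le_mul_of_nonneg_right hW3 (norm_nonneg _)
        _ = ‖x - p‖ := one_mul _
    -- ‖x - p‖² = ‖x‖² - ‖u‖²
    have h3 : ‖x - p‖ ^ 2 = ‖x‖ ^ 2 - ‖u‖ ^ 2 := by
      rw [@norm_sub_sq ℂ]
      have hre : RCLike.re (inner ℂ x p : ℂ) = ‖u‖ ^ 2 := by
        rw [hxp, inner_self_eq_norm_sq]
      have hre2 : ‖p‖ ^ 2 = ‖u‖ ^ 2 := by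
        rw [← inner_self_eq_norm_sq (𝕜 := ℂ), ← inner_self_eq_norm_sq (𝕜 := ℂ), hVu]
      rw [hre, hre2]; ring
    -- combine
    have h4 : ‖Matrix.toEuclideanLin G x‖ ^ 2 ≤ ‖x‖ ^ 2 := by
      have hw2 : ‖w‖ ^ 2 ≤ ‖x - p‖ ^ 2 := by
        exact pow_le_pow_left₀ (norm_nonneg _) h2 2
      rw [h1]
      linarith [hw2, h3]
    exact (pow_le_pow_iff_left₀ (norm_nonneg _) (norm_nonneg _) two_ne_zero).mp h4
end

section
/- Let U ∈ ℂ^{m×r} and V ∈ ℂ^{n×r} have orthonormal columns, and define the projection P_T(Z) = U Uᴴ Z + Z V Vᴴ − U Uᴴ Z V Vᴴ. Then for the standard basis matrix E_{ij} = e_i e_jᴴ, ‖P_T(E_{ij})‖_F² = ‖Uᴴ e_i‖² + ‖Vᴴ e_j‖² − ‖Uᴴ e_i‖²·‖Vᴴ e_j‖², and in particular ‖P_T(E_{ij})‖_F² ≤ ‖Uᴴ e_i‖² + ‖Vᴴ e_j‖². -/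
open Matrix

noncomputable def frobNorm {m n : ℕ} (A : Matrix (Fin m) (Fin n) ℂ) : ℝ :=
  Real.sqrt (∑ i, ∑ j, ‖A i j‖ ^ 2)

noncomputable def projT {m n r : ℕ} (U : Matrix (Fin m) (Fin r) ℂ) (V : Matrix (Fin n) (Fin r) ℂ)
    (Z : Matrix (Fin m) (Fin n) ℂ) : Matrix (Fin m) (Fin n) ℂ :=
  U * Uᴴ * Z + Z * (V * Vᴴ) - U * Uᴴ * Z * (V * Vᴴ)

/-- For `U`, `V` with orthonormal columns and `E_{ij} = e_i e_jᴴ`,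
`‖P_T(E_{ij})‖_F² = ‖Uᴴ e_i‖² + ‖Vᴴ e_j‖² − ‖Uᴴ e_i‖² ‖Vᴴ e_j‖²`; in particular
`‖P_T(E_{ij})‖_F² ≤ ‖Uᴴ e_i‖² + ‖Vᴴ e_j‖²`. -/
theorem stmt_6 (m n r : ℕ) (U : Matrix (Fin m) (Fin r) ℂ) (V : Matrix (Fin n) (Fin r) ℂ)
    (hU : Uᴴ * U = 1) (hV : Vᴴ * V = 1) (i : Fin m) (j : Fin n) :
    frobNorm (projT U V (Matrix.single i j (1 : ℂ))) ^ 2 =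
        (∑ k, ‖(Uᴴ *ᵥ Pi.single i 1) k‖ ^ 2) + (∑ k, ‖(Vᴴ *ᵥ Pi.single j 1) k‖ ^ 2) -
          (∑ k, ‖(Uᴴ *ᵥ Pi.single i 1) k‖ ^ 2) * (∑ k, ‖(Vᴴ *ᵥ Pi.single j 1) k‖ ^ 2) ∧
      frobNorm (projT U V (Matrix.single i j (1 : ℂ))) ^ 2 ≤
        (∑ k, ‖(Uᴴ *ᵥ Pi.single i 1) k‖ ^ 2) + ∑ k, ‖(Vᴴ *ᵥ Pi.single j 1) k‖ ^ 2 := by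
  set P : Matrix (Fin m) (Fin m) ℂ := U * Uᴴ with hPdef
  set Q : Matrix (Fin n) (Fin n) ℂ := V * Vᴴ with hQdef
  set α : ℝ := ∑ k, ‖(Uᴴ *ᵥ Pi.single i 1) k‖ ^ 2 with hαdef
  set β : ℝ := ∑ k, ‖(Vᴴ *ᵥ Pi.single j 1) k‖ ^ 2 with hβdef
  -- basic facts
  have hα0 : 0 ≤ α := Finset.sum_nonneg fun k _ => by positivity
  have hβ0 : 0 ≤ β := Finset.sum_nonneg fun k _ => by positivity
  have hPP : P * P = P := by
    rw [hPdef, Matrix.mul_assoc, ← Matrix.mul_assoc Uᴴ U Uᴴ, hU, Matrix.one_mul]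
  have hQQ : Q * Q = Q := by
    rw [hQdef, Matrix.mul_assoc, ← Matrix.mul_assoc Vᴴ V Vᴴ, hV, Matrix.one_mul]
  have hPH : ∀ a b, P b a = (starRingEnd ℂ) (P a b) := by
    intro a b
    simp [hPdef, Matrix.mul_apply, Matrix.conjTranspose_apply, map_sum, mul_comm]
  have hQH : ∀ a b, Q b a = (starRingEnd ℂ) (Q a b) := by
    intro a b
    simp [hQdef, Matrix.mul_apply, Matrix.conjTranspose_apply, map_sum, mul_comm]
  have hPii : P i i = (α : ℂ) := by
    rw [hαdef]
    push_cast
    simp only [Matrix.mulVec_single, mul_one]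
    rw [hPdef, Matrix.mul_apply]
    refine Finset.sum_congr rfl fun k _ => ?_
    simp [Matrix.conjTranspose_apply, Complex.mul_conj, Complex.normSq_eq_norm_sq]
  have hQjj : Q j j = (β : ℂ) := by
    rw [hβdef]
    push_cast
    simp only [Matrix.mulVec_single, mul_one]
    rw [hQdef, Matrix.mul_apply]
    refine Finset.sum_congr rfl fun k _ => ?_
    simp [Matrix.conjTranspose_apply, Complex.mul_conj, Complex.normSq_eq_norm_sq]
  have hsumP : ∑ a, ‖P a i‖ ^ 2 = α := by
    have hc : ∑ a, ((‖P a i‖ ^ 2 : ℝ) : ℂ) = (α : ℂ) := by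
      calc ∑ a, ((‖P a i‖ ^ 2 : ℝ) : ℂ) = ∑ a, P i a * P a i := by
            refine Finset.sum_congr rfl fun a _ => ?_
            rw [hPH a i, ← Complex.normSq_eq_conj_mul_self]
            norm_cast
            simp [Complex.normSq_eq_norm_sq]
        _ = (P * P) i i := (Matrix.mul_apply).symm
        _ = (α : ℂ) := by rw [hPP, hPii]
    exact_mod_cast (by push_cast at hc ⊢; exact hc : ((∑ a, ‖P a i‖ ^ 2 : ℝ) : ℂ) = (α : ℂ))
  have hsumQ : ∑ b, ‖Q j b‖ ^ 2 = β := by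
    have hc : ∑ b, ((‖Q j b‖ ^ 2 : ℝ) : ℂ) = (β : ℂ) := by
      calc ∑ b, ((‖Q j b‖ ^ 2 : ℝ) : ℂ) = ∑ b, Q j b * Q b j := by
            refine Finset.sum_congr rfl fun b _ => ?_
            rw [hQH j b, mul_comm, ← Complex.normSq_eq_conj_mul_self]
            norm_cast
            simp [Complex.normSq_eq_norm_sq]
        _ = (Q * Q) j j := (Matrix.mul_apply).symm
        _ = (β : ℂ) := by rw [hQQ, hQjj]
    exact_mod_cast (by push_cast at hc ⊢; exact hc : ((∑ b, ‖Q j b‖ ^ 2 : ℝ) : ℂ) = (β : ℂ))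
  -- entry formula
  set M : Matrix (Fin m) (Fin n) ℂ := projT U V (Matrix.single i j (1 : ℂ)) with hMdef
  have hM : ∀ a b, M a b =
      (if j = b then P a i else 0) + (if i = a then Q j b else 0) - P a i * Q j b := by
    intro a b
    have h3 : (P * Matrix.single i j (1:ℂ) * Q) a b = P a i * Q j b := by
      rw [Matrix.mul_apply]
      calc ∑ c, (P * Matrix.single i j (1:ℂ)) a c * Q c b
          = ∑ c, (if j = c then P a i else 0) * Q c b := by
            refine Finset.sum_congr rfl fun c _ => ?_
            rw [show (P * Matrix.single i j (1:ℂ)) a c = if j = c then P a i else 0 by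
              simp [Matrix.mul_apply, Matrix.single, Finset.mul_sum, ite_and]]
        _ = P a i * Q j b := by simp
    rw [hMdef]
    show (P * Matrix.single i j (1:ℂ) + Matrix.single i j (1:ℂ) * Q
        - P * Matrix.single i j (1:ℂ) * Q) a b = _
    rw [Matrix.sub_apply, Matrix.add_apply, h3,
      show (P * Matrix.single i j (1:ℂ)) a b = if j = b then P a i else 0 by
        simp [Matrix.mul_apply, Matrix.single, Finset.mul_sum, ite_and],
      show (Matrix.single i j (1:ℂ) * Q) a b = if i = a then Q j b else 0 by
        simp [Matrix.mul_apply, Matrix.single, ite_and]]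
  -- values of |M a b|^2 in the four cases
  have hMij : ‖M i j‖ ^ 2 = (α + β - α * β) ^ 2 := by
    rw [hM i j, if_pos rfl, if_pos rfl, hPii, hQjj]
    rw [show ((α:ℂ) + (β:ℂ) - (α:ℂ) * (β:ℂ)) = ((α + β - α * β : ℝ) : ℂ) by push_cast; ring]
    rw [Complex.norm_real, Real.norm_eq_abs, sq_abs]
  have hMib : ∀ b, b ≠ j → ‖M i b‖ ^ 2 = (1 - α) ^ 2 * ‖Q j b‖ ^ 2 := by
    intro b hb
    rw [hM i b, if_neg (fun h => hb h.symm), if_pos rfl, hPii, zero_add]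
    rw [show (Q j b - (α:ℂ) * Q j b) = ((1 - α : ℝ) : ℂ) * Q j b by push_cast; ring]
    rw [norm_mul, mul_pow, Complex.norm_real, Real.norm_eq_abs, sq_abs]
  have hMaj : ∀ a, a ≠ i → ‖M a j‖ ^ 2 = ‖P a i‖ ^ 2 * (1 - β) ^ 2 := by
    intro a ha
    rw [hM a j, if_pos rfl, if_neg (fun h => ha h.symm), add_zero, hQjj]
    rw [show (P a i - P a i * (β:ℂ)) = P a i * ((1 - β : ℝ) : ℂ) by push_cast; ring]
    rw [norm_mul, mul_pow, Complex.norm_real, Real.norm_eq_abs, sq_abs]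
  have hMab : ∀ a b, a ≠ i → b ≠ j → ‖M a b‖ ^ 2 = ‖P a i‖ ^ 2 * ‖Q j b‖ ^ 2 := by
    intro a b ha hb
    rw [hM a b, if_neg (fun h => hb h.symm), if_neg (fun h => ha h.symm), zero_add, zero_sub,
      norm_neg, norm_mul, mul_pow]
  -- split the double sum
  have hS : ∑ a, ∑ b, ‖M a b‖ ^ 2 = α + β - α * β := by
    have hsplitb : ∀ (f : Fin n → ℝ), ∑ b, f b = (∑ b ∈ Finset.univ \ {j}, f b) + f j :=
      fun f => Finset.sum_eq_sum_sdiff_singleton_add (Finset.mem_univ j) f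
    have hsplita : ∀ (f : Fin m → ℝ), ∑ a, f a = (∑ a ∈ Finset.univ \ {i}, f a) + f i :=
      fun f => Finset.sum_eq_sum_sdiff_singleton_add (Finset.mem_univ i) f
    have hq' : ∑ b ∈ Finset.univ \ {j}, ‖Q j b‖ ^ 2 = β - β ^ 2 := by
      have := hsplitb (fun b => ‖Q j b‖ ^ 2)
      rw [hsumQ] at this
      have hqj : ‖Q j j‖ ^ 2 = β ^ 2 := by
        rw [hQjj, Complex.norm_real, Real.norm_eq_abs, sq_abs]
      linarith [this, hqj]
    have hp' : ∑ a ∈ Finset.univ \ {i}, ‖P a i‖ ^ 2 = α - α ^ 2 := by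
      have := hsplita (fun a => ‖P a i‖ ^ 2)
      rw [hsumP] at this
      have hpi : ‖P i i‖ ^ 2 = α ^ 2 := by
        rw [hPii, Complex.norm_real, Real.norm_eq_abs, sq_abs]
      linarith [this, hpi]
    rw [hsplita (fun a => ∑ b, ‖M a b‖ ^ 2)]
    have hrow_i : ∑ b, ‖M i b‖ ^ 2 = (1 - α) ^ 2 * (β - β ^ 2) + (α + β - α * β) ^ 2 := by
      rw [hsplitb (fun b => ‖M i b‖ ^ 2), hMij]
      congr 1
      rw [← hq', Finset.mul_sum]
      refine Finset.sum_congr rfl fun b hb => ?_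
      rw [hMib b (by simpa using (Finset.mem_sdiff.mp hb).2)]
    have hrow_a : ∑ a ∈ Finset.univ \ {i}, ∑ b, ‖M a b‖ ^ 2
        = (α - α ^ 2) * (β - β ^ 2) + (α - α ^ 2) * (1 - β) ^ 2 := by
      have : ∀ a ∈ Finset.univ \ {i}, ∑ b, ‖M a b‖ ^ 2
          = ‖P a i‖ ^ 2 * (β - β ^ 2) + ‖P a i‖ ^ 2 * (1 - β) ^ 2 := by
        intro a ha
        have ha' : a ≠ i := by simpa using (Finset.mem_sdiff.mp ha).2
        rw [hsplitb (fun b => ‖M a b‖ ^ 2), hMaj a ha']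
        congr 1
        rw [← hq', Finset.mul_sum]
        refine Finset.sum_congr rfl fun b hb => ?_
        rw [hMab a b ha' (by simpa using (Finset.mem_sdiff.mp hb).2)]
      rw [Finset.sum_congr rfl this, Finset.sum_add_distrib, ← Finset.sum_mul, ← Finset.sum_mul, hp']
    rw [hrow_i, hrow_a]
    ring
  have hfn : frobNorm M ^ 2 = α + β - α * β := by
    rw [frobNorm, Real.sq_sqrt (Finset.sum_nonneg fun a _ => Finset.sum_nonneg fun b _ => by positivity), hS]
  exact ⟨hfn, by rw [hfn]; nlinarith [mul_nonneg hα0 hβ0]⟩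
end
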